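/- arXiv:2412.13269 — 5 statements merged into one kernel-verified Lean document; each statement's English description precedes it below -/
import Mathlib

section
/- Let N ≥ 2 be a power of two and Q an odd positive integer, so that N is invertible in ZMod Q. Let m_0, …, m_{N−1} be elements of R = (ZMod Q)[X]/(X^N + 1). Define c_j^{(0)} = N^{−1}·m_j for 0 ≤ j < N, and for each step i = 0, 1, …, log₂N − 1 set t = N/2^{i+1}, let g = 2N − 1 if i = 0 and g = 5^{2^{i−1}} mod 2N otherwise, and define c_j^{(i+1)} = c_j^{(i)} + X^t·c_{j+t}^{(i)} + φ_g(c_j^{(i)} − X^t·c_{j+t}^{(i)}) for 0 ≤ j < t. Then the final element satisfies c_0^{(log₂N)} = Σ_{i=0}^{N−1} m_i[0]·X^i, where m_i[0] is the constant coefficient of the degree-<N representative of m_i. -/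
open Polynomial AdjoinRoot

noncomputable section

/-- The negacyclic ring `(ZMod Q)[X]/(X^N + 1)`. -/
abbrev Rq (Q N : ℕ) := AdjoinRoot (X ^ N + 1 : (ZMod Q)[X])

lemma monicXN (Q N : ℕ) (hN : 0 < N) : (X ^ N + 1 : (ZMod Q)[X]).Monic :=
  Polynomial.monic_X_pow_add (lt_of_le_of_lt Polynomial.degree_one_le (by exact_mod_cast hN))

/-- The `k`-th coefficient of the unique degree `< N` representative of `m`. -/
def coeffOf {Q N : ℕ} (hN : 0 < N) (m : Rq Q N) (k : ℕ) : ZMod Q :=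
  ((AdjoinRoot.modByMonicHom (monicXN Q N hN)) m).coeff k

lemma root_pow_eq_neg_one (Q N : ℕ) :
    (root (X ^ N + 1 : (ZMod Q)[X])) ^ N = -1 := by
  have h : (Polynomial.aeval (root (X ^ N + 1 : (ZMod Q)[X]))) (X ^ N + 1 : (ZMod Q)[X]) = 0 := by
    rw [AdjoinRoot.aeval_eq, AdjoinRoot.mk_self]
  simp only [map_add, map_pow, Polynomial.aeval_X, map_one] at h
  linear_combination h

lemma aeval_root_pow_odd (Q N : ℕ) {g : ℕ} (hg : Odd g) :
    (Polynomial.aeval ((root (X ^ N + 1 : (ZMod Q)[X])) ^ g)) (X ^ N + 1 : (ZMod Q)[X]) = 0 := by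
  have h : ((root (X ^ N + 1 : (ZMod Q)[X])) ^ g) ^ N = -1 := by
    rw [← pow_mul, mul_comm, pow_mul, root_pow_eq_neg_one, Odd.neg_one_pow hg]
  simp only [map_add, map_pow, Polynomial.aeval_X, map_one, h]
  ring

/-- The automorphism `φ_g : X ↦ X^g` of `(ZMod Q)[X]/(X^N+1)`, for `g` odd. -/
def phi (Q N : ℕ) (g : ℕ) (hg : Odd g) : Rq Q N →ₐ[ZMod Q] Rq Q N :=
  AdjoinRoot.liftAlgHom _ (Algebra.ofId _ _) ((root (X ^ N + 1 : (ZMod Q)[X])) ^ g) (aeval_root_pow_odd Q N hg)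

end

lemma odd_repack_exponent (N i : ℕ) (hN : 0 < N) :
    Odd (if i = 0 then 2 * N - 1 else 5 ^ 2 ^ (i - 1) % (2 * N)) := by
  split
  · exact ⟨N - 1, by omega⟩
  · rw [Nat.odd_iff, Nat.mod_mod_of_dvd _ ⟨N, rfl⟩, Nat.pow_mod]; norm_num

/-! For `N = 2^k` let `T_n = (1 + φ_{g_{n-1}}) ∘ ⋯ ∘ (1 + φ_{g_0})` (`partialTrace n`).
Since `g_i ≡ 1 + 2^(i+1) [MOD 2^(i+2)]`, the automorphism `φ_{g_i}` negates `X^(N/2^(i+1))`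
and fixes its square, so each folding step turns one application of `1 + φ_{g_i}` into a merge
of two interleaved sums; by induction
`c_j^{(i)} = ∑_{s < 2^i} X^((N/2^i) s) · T_i (c_{j + (N/2^i) s}^{(0)})`.
For `0 < a = 2^v u < N` with `u` odd, the factor `1 + φ_{g_(k-1-v)}` already kills `X^a`
(the `φ`'s commute), while `T_k 1 = 2^k = N`; hence `T_k m = N · m[0]`, and the factor
`N⁻¹` in `c^{(0)}` cancels it. -/

open Finset

theorem five_pow_two_pow_modEq (m : ℕ) : 5 ^ 2 ^ m ≡ 1 + 2 ^ (m + 2) [MOD 2 ^ (m + 3)] := by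
  suffices h : ∃ y, 5 ^ 2 ^ m = 1 + 2 ^ (m + 2) + 2 ^ (m + 3) * y by
    obtain ⟨y, hy⟩ := h
    rw [hy]
    exact Nat.add_mul_mod_self_left _ _ _
  induction m with
  | zero => exact ⟨0, rfl⟩
  | succ m ih =>
    obtain ⟨y, hy⟩ := ih
    refine ⟨y + 2 ^ m * (1 + 2 * y) ^ 2, ?_⟩
    rw [pow_succ, pow_mul, hy]
    ring

theorem sum_range_two_mul {M : Type*} [AddCommMonoid M] (f : ℕ → M) (n : ℕ) :
    ∑ s ∈ range (2 * n), f s = ∑ s ∈ range n, f (2 * s) + ∑ s ∈ range n, f (2 * s + 1) := by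
  induction n with
  | zero => simp
  | succ n ih =>
    rw [mul_add, mul_one, sum_range_succ, sum_range_succ, ih, sum_range_succ, sum_range_succ]
    abel

theorem add_mul_add_map_sub_mul {R F : Type*} [CommRing R] [FunLike F R R] [RingHomClass F R R]
    (φ : F) {w : R} (hw : φ w = -w)
    (a b : R) : a + w * b + φ (a - w * b) = a + φ a + w * (b + φ b) := by
  rw [map_sub, map_mul, hw]
  ring

section NegacyclicRing

variable {Q N : ℕ}

local notation "ζ" => root (X ^ N + 1 : (ZMod Q)[X])

theorem root_pow_add_self (a : ℕ) : ζ ^ (a + N) = -ζ ^ a := by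
  rw [pow_add, root_pow_eq_neg_one, mul_neg_one]

theorem root_pow_eq_of_modEq {a b : ℕ} (h : a ≡ b [MOD 2 * N]) : ζ ^ a = ζ ^ b :=
  pow_eq_pow_of_modEq h (by rw [mul_comm, pow_mul, root_pow_eq_neg_one, neg_one_sq])

theorem phi_root (g : ℕ) (hg : Odd g) : phi Q N g hg ζ = ζ ^ g :=
  liftAlgHom_root _ _ _ _

theorem phi_root_pow (g : ℕ) (hg : Odd g) (a : ℕ) : phi Q N g hg (ζ ^ a) = ζ ^ (g * a) := by
  rw [map_pow, phi_root, pow_mul]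

theorem phi_comp_phi (g h : ℕ) (hg : Odd g) (hh : Odd h) :
    (phi Q N g hg).comp (phi Q N h hh) = (phi Q N h hh).comp (phi Q N g hg) :=
  AdjoinRoot.algHom_ext <| by
    simp only [AlgHom.comp_apply, phi_root, phi_root_pow, mul_comm]

theorem sum_coeffOf_smul_root_pow (hN : 0 < N) (x : Rq Q N) :
    ∑ a ∈ range N, coeffOf hN x a • ζ ^ a = x := by
  cases subsingleton_or_nontrivial (ZMod Q)
  · have := Module.subsingleton (ZMod Q) (Rq Q N)
    exact Subsingleton.elim _ _
  have hdeg : (X ^ N + 1 : (ZMod Q)[X]).natDegree = N := by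
    simpa using natDegree_X_pow_add_C (n := N) (r := (1 : ZMod Q))
  conv_rhs => rw [← (powerBasis' (monicXN Q N hN)).basis.sum_repr x]
  rw [PowerBasis.coe_basis]
  change _ = ∑ i : Fin (X ^ N + 1 : (ZMod Q)[X]).natDegree, coeffOf hN x i • ζ ^ (i : ℕ)
  rw [Fin.sum_univ_eq_sum_range (fun a => coeffOf hN x a • ζ ^ a), hdeg]

end NegacyclicRing

-- Reducible, so that `odd_repack_exponent`, stated for the unfolded `if`, is accepted where
-- `Odd (repackExponent N i)` is expected even at the transparency used by `rw`.
abbrev repackExponent (N i : ℕ) : ℕ :=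
  if i = 0 then 2 * N - 1 else 5 ^ 2 ^ (i - 1) % (2 * N)

theorem repackExponent_modEq {N k i : ℕ} (hN : N = 2 ^ k) (hi : i < k) :
    repackExponent N i ≡ 1 + 2 ^ (i + 1) [MOD 2 ^ (i + 2)] := by
  obtain _ | i := i
  · obtain ⟨n, rfl⟩ : ∃ n, k = n + 1 := ⟨k - 1, by omega⟩
    have : 0 < 2 ^ n := Nat.two_pow_pos n
    simp only [repackExponent, ↓reduceIte, Nat.ModEq, hN, pow_succ]
    omega
  · have hdvd : 2 ^ (i + 3) ∣ 2 * N := hN ▸ pow_succ' 2 k ▸ pow_dvd_pow 2 (by omega)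
    exact ((Nat.mod_modEq _ _).of_dvd hdvd).trans (five_pow_two_pow_modEq i)

noncomputable section RepackingTrace

variable {Q N : ℕ} (hN : 0 < N)

local notation "ζ" => root (X ^ N + 1 : (ZMod Q)[X])

def repackAut (i : ℕ) : Rq Q N →ₐ[ZMod Q] Rq Q N :=
  phi Q N (repackExponent N i) (odd_repack_exponent N i hN)

def partialTrace : ℕ → Module.End (ZMod Q) (Rq Q N)
  | 0 => 1
  | i + 1 => (1 + (repackAut hN i).toLinearMap) * partialTrace i

theorem partialTrace_succ_apply (i : ℕ) (x : Rq Q N) :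
    partialTrace hN (i + 1) x = partialTrace hN i x + repackAut hN i (partialTrace hN i x) :=
  rfl

theorem repackAut_root_pow_eq_neg {k i t : ℕ} (hNk : N = 2 ^ k) (hi : i < k)
    (ht : 2 ^ (i + 1) * t = N) : repackAut hN i (ζ ^ t) = -ζ ^ t := by
  have h := (repackExponent_modEq hNk hi).mul_right' t
  have h2N : 2 ^ (i + 2) * t = 2 * N := by rw [pow_succ, mul_right_comm, ht, mul_comm]
  rw [h2N, add_mul, one_mul, ht] at h
  rw [repackAut, phi_root_pow, root_pow_eq_of_modEq h, root_pow_add_self]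

theorem commute_repackAut_partialTrace (i n : ℕ) :
    Commute (repackAut hN i).toLinearMap (partialTrace (Q := Q) hN n) := by
  induction n with
  | zero => exact Commute.one_right _
  | succ n ih =>
    refine Commute.mul_right (Commute.add_right (Commute.one_right _) ?_) ih
    exact LinearMap.ext fun x => DFunLike.congr_fun (phi_comp_phi _ _ _ _) x

theorem partialTrace_eq_zero {i n : ℕ} (hin : i < n) {x : Rq Q N}
    (hx : x + repackAut hN i x = 0) : partialTrace hN n x = 0 := by
  induction n with
  | zero => omega
  | succ n ih =>
    rcases Nat.lt_succ_iff_lt_or_eq.mp hin with hin | rfl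
    · rw [partialTrace_succ_apply, ih hin, map_zero, add_zero]
    · have hcomm := LinearMap.congr_fun (commute_repackAut_partialTrace hN i i).eq x
      simp only [Module.End.mul_apply, AlgHom.toLinearMap_apply] at hcomm
      rw [partialTrace_succ_apply, hcomm, ← map_add, hx, map_zero]

theorem partialTrace_algebraMap (n : ℕ) (r : ZMod Q) :
    partialTrace hN n (algebraMap (ZMod Q) (Rq Q N) r) =
      algebraMap (ZMod Q) (Rq Q N) (2 ^ n * r) := by
  induction n with
  | zero => simp [partialTrace]
  | succ n ih =>
    rw [partialTrace_succ_apply, ih, AlgHom.commutes, ← map_add]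
    congr 1
    ring

theorem partialTrace_root_pow_eq_zero {k a : ℕ} (hNk : N = 2 ^ k) (ha0 : 0 < a) (haN : a < N) :
    partialTrace hN k (ζ ^ a) = 0 := by
  obtain ⟨v, u, hu, rfl⟩ := Nat.exists_eq_two_pow_mul_odd ha0.ne'
  have hvk : v < k := by
    rw [← Nat.pow_lt_pow_iff_right (by norm_num : 1 < 2), ← hNk]
    exact lt_of_le_of_lt (Nat.le_mul_of_pos_right _ hu.pos) haN
  have ht : 2 ^ (k - 1 - v + 1) * 2 ^ v = N := by
    rw [← pow_add, hNk]
    congr 1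
    omega
  refine partialTrace_eq_zero hN (i := k - 1 - v) (by omega) ?_
  rw [pow_mul, map_pow, repackAut_root_pow_eq_neg hN hNk (by omega) ht, hu.neg_pow, add_neg_cancel]

theorem partialTrace_eq_algebraMap_coeffOf {k : ℕ} (hNk : N = 2 ^ k) (x : Rq Q N) :
    partialTrace hN k x = algebraMap (ZMod Q) (Rq Q N) (N * coeffOf hN x 0) := by
  conv_lhs => rw [← sum_coeffOf_smul_root_pow hN x]
  rw [map_sum, sum_eq_single_of_mem 0 (mem_range.mpr hN)]
  · have h2k : (2 : ZMod Q) ^ k = N := by rw [hNk]; push_cast; rfl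
    rw [pow_zero, map_smul, ← map_one (algebraMap (ZMod Q) (Rq Q N)), partialTrace_algebraMap,
      Algebra.smul_def, ← map_mul, mul_one, h2k, mul_comm]
  · intro a ha ha0
    rw [map_smul, partialTrace_root_pow_eq_zero hN hNk (Nat.pos_of_ne_zero ha0) (mem_range.mp ha),
      smul_zero]

theorem repack_eq_sum_partialTrace {k : ℕ} (hNk : N = 2 ^ k) (c : ℕ → ℕ → Rq Q N)
    (hstep : ∀ i < k, ∀ j < N / 2 ^ (i + 1),
      c (i + 1) j = c i j + ζ ^ (N / 2 ^ (i + 1)) * c i (j + N / 2 ^ (i + 1)) +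
        repackAut hN i (c i j - ζ ^ (N / 2 ^ (i + 1)) * c i (j + N / 2 ^ (i + 1))))
    {i : ℕ} (hi : i ≤ k) {j : ℕ} (hj : j < N / 2 ^ i) :
    c i j = ∑ s ∈ range (2 ^ i),
      ζ ^ (N / 2 ^ i * s) * partialTrace hN i (c 0 (j + N / 2 ^ i * s)) := by
  induction i generalizing j with
  | zero => simp [partialTrace]
  | succ i ih =>
    have hstep_ij := hstep i hi j hj
    set t := N / 2 ^ (i + 1)
    have ht : 2 ^ (i + 1) * t = N := Nat.mul_div_cancel' (hNk ▸ pow_dvd_pow 2 hi)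
    have h2t : N / 2 ^ i = 2 * t := by
      rw [← ht, pow_succ, mul_assoc, Nat.mul_div_cancel_left _ (Nat.two_pow_pos i)]
    have hw : repackAut hN i (ζ ^ t) = -ζ ^ t := repackAut_root_pow_eq_neg hN hNk hi ht
    have hw2 : ∀ s, repackAut hN i (ζ ^ (2 * t * s)) = ζ ^ (2 * t * s) := fun s => by
      rw [show 2 * t * s = t * (2 * s) by ring, pow_mul, map_pow, hw, (even_two_mul s).neg_pow]
    rw [hstep_ij, ih (by omega) (by rw [h2t]; omega), ih (by omega) (by rw [h2t]; omega),
      h2t, add_mul_add_map_sub_mul _ hw]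
    simp only [map_sum, map_mul, hw2, ← sum_add_distrib, ← mul_add, ← partialTrace_succ_apply,
      mul_sum]
    rw [pow_succ', sum_range_two_mul, ← sum_add_distrib]
    refine sum_congr rfl fun s _ => ?_
    rw [show t * (2 * s) = 2 * t * s by ring, show t * (2 * s + 1) = t + 2 * t * s by ring,
      ← add_assoc j, pow_add]
    ring

end RepackingTrace

theorem ring_repacking_correct_general (k N Q : ℕ)
    (hN : N = 2 ^ k) (hQ : Odd Q)
    (m : ℕ → Rq Q N) (c : ℕ → ℕ → Rq Q N)
    (hc0 : ∀ j < N, c 0 j = algebraMap (ZMod Q) (Rq Q N) ((N : ZMod Q)⁻¹) * m j)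
    (hstep : ∀ i < k, ∀ j < N / 2 ^ (i + 1),
      c (i + 1) j =
        c i j + (root (X ^ N + 1 : (ZMod Q)[X])) ^ (N / 2 ^ (i + 1)) * c i (j + N / 2 ^ (i + 1)) +
          phi Q N (if i = 0 then 2 * N - 1 else 5 ^ 2 ^ (i - 1) % (2 * N))
            (odd_repack_exponent N i (hN ▸ Nat.two_pow_pos k))
            (c i j - (root (X ^ N + 1 : (ZMod Q)[X])) ^ (N / 2 ^ (i + 1)) *
              c i (j + N / 2 ^ (i + 1)))) :
    c k 0 = ∑ i ∈ Finset.range N,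
      algebraMap (ZMod Q) (Rq Q N) (coeffOf (hN ▸ Nat.two_pow_pos k) (m i) 0) *
        (root (X ^ N + 1 : (ZMod Q)[X])) ^ i := by
  have hN0 : 0 < N := hN ▸ Nat.two_pow_pos k
  have hdiv : N / 2 ^ k = 1 := by rw [hN, Nat.div_self (Nat.two_pow_pos k)]
  have hunit : IsUnit (N : ZMod Q) :=
    (ZMod.isUnit_iff_coprime N Q).mpr (hN ▸ (Nat.coprime_two_left.mpr hQ).pow_left k)
  rw [repack_eq_sum_partialTrace hN0 hN c hstep le_rfl (by rw [hdiv]; exact one_pos), hdiv,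
    show range (2 ^ k) = range N by rw [hN]]
  refine sum_congr rfl fun s hs => ?_
  rw [one_mul, zero_add, hc0 s (mem_range.mp hs), ← Algebra.smul_def, map_smul,
    partialTrace_eq_algebraMap_coeffOf hN0 hN, Algebra.smul_def, ← map_mul,
    ← mul_assoc, ZMod.inv_mul_of_unit _ hunit, one_mul, mul_comm]

/-- Correctness of the iterative ring-repacking algorithm (Algorithm 1 / Lemma 1):
starting from `c_j^{(0)} = N⁻¹ · m_j` and folding `log₂ N` times with the automorphisms
`φ_g`, the final element has the constant coefficients of the `m_i` as its coefficients. -/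
theorem ring_repacking_correct (k N Q : ℕ)
    (hk : 1 ≤ k) (hN : N = 2 ^ k) (hQ0 : 0 < Q) (hQ : Odd Q)
    (m : ℕ → Rq Q N) (c : ℕ → ℕ → Rq Q N)
    (hc0 : ∀ j < N, c 0 j = algebraMap (ZMod Q) (Rq Q N) ((N : ZMod Q)⁻¹) * m j)
    (hstep : ∀ i < k, ∀ j < N / 2 ^ (i + 1),
      c (i + 1) j =
        c i j + (root (X ^ N + 1 : (ZMod Q)[X])) ^ (N / 2 ^ (i + 1)) * c i (j + N / 2 ^ (i + 1)) +
          phi Q N (if i = 0 then 2 * N - 1 else 5 ^ 2 ^ (i - 1) % (2 * N))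
            (odd_repack_exponent N i (hN ▸ Nat.two_pow_pos k))
            (c i j - (root (X ^ N + 1 : (ZMod Q)[X])) ^ (N / 2 ^ (i + 1)) *
              c i (j + N / 2 ^ (i + 1)))) :
    c k 0 = ∑ i ∈ Finset.range N,
      algebraMap (ZMod Q) (Rq Q N) (coeffOf (hN ▸ Nat.two_pow_pos k) (m i) 0) *
        (root (X ^ N + 1 : (ZMod Q)[X])) ^ i :=
  ring_repacking_correct_general k N Q hN hQ m c hc0 hstep
end

section
/- Let N ≥ 2 be a power of two, Q a positive integer, and R = (ZMod Q)[X]/(X^N + 1). For every m ∈ R, the element m + φ_{2N−1}(m) has constant coefficient 2·m[0] and, for each 1 ≤ k ≤ N − 1, k-th coefficient equal to m[k] − m[N−k]. (Here φ_{2N−1} is the automorphism X ↦ X^{2N−1} = X^{−1}.) -/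
open Polynomial AdjoinRoot

/-! Since `ζ ^ N = -1`, the image `ζ ^ (2N-1)` of the root `ζ` is its inverse, so for the
representative `p` of `m` (of degree `< N`) we get `φ(m) = p(ζ⁻¹) = ζ ^ (-N) · (reflect N p)(ζ) =
-(reflect N p)(ζ)`. The reflected polynomial has degree `≤ N`, and reducing it modulo `X ^ N + 1`
only moves its top coefficient `p[0]` into the constant term with a sign change. Hence
`φ(m)[0] = m[0]` and `φ(m)[j] = -m[N-j]` for `0 < j < N`. -/

namespace Polynomial

variable {R : Type*} [CommRing R] {N : ℕ}

theorem monic_X_pow_add_one (hN : 0 < N) : (X ^ N + 1 : R[X]).Monic :=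
  leadingCoeff_X_pow_add_one hN

theorem degree_X_pow_add_one [Nontrivial R] (hN : 0 < N) : (X ^ N + 1 : R[X]).degree = N := by
  rw [← C_1, degree_X_pow_add_C hN]

theorem degree_modByMonic_X_pow_add_one_lt (hN : 0 < N) (p : R[X]) :
    (p %ₘ (X ^ N + 1)).degree < (N : WithBot ℕ) := by
  nontriviality R
  exact degree_X_pow_add_one (R := R) hN ▸ degree_modByMonic_lt p (monic_X_pow_add_one hN)

theorem degree_sub_C_coeff_mul_X_pow_add_one_lt (hN : 0 < N) {q : R[X]}
    (hq : q.natDegree ≤ N) : (q - C (q.coeff N) * (X ^ N + 1)).degree < (N : WithBot ℕ) := by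
  rw [degree_lt_iff_coeff_zero]
  intro i hi
  rcases hi.eq_or_lt with rfl | hlt
  · simp [coeff_one, hN.ne']
  · simp [coeff_eq_zero_of_natDegree_lt (hq.trans_lt hlt), coeff_one, coeff_X_pow, hlt.ne',
      (hN.trans hlt).ne']

theorem modByMonic_X_pow_add_one_of_natDegree_le (hN : 0 < N) {q : R[X]}
    (hq : q.natDegree ≤ N) : q %ₘ (X ^ N + 1) = q - C (q.coeff N) * (X ^ N + 1) := by
  nontriviality R
  refine (div_modByMonic_unique (C (q.coeff N)) _ (monic_X_pow_add_one hN) ⟨by ring, ?_⟩).2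
  exact degree_X_pow_add_one (R := R) hN ▸ degree_sub_C_coeff_mul_X_pow_add_one_lt hN hq

end Polynomial

section

variable {Q N : ℕ}

local notation "ζ" => root (X ^ N + 1 : (ZMod Q)[X])

theorem root_pow_two_mul_sub_one_mul_root (hN : 0 < N) : ζ ^ (2 * N - 1) * ζ = 1 := by
  rw [← pow_succ, Nat.sub_add_cancel (by omega), pow_mul', root_pow_eq_neg_one, neg_one_sq]

theorem root_pow_two_mul_sub_one_pow (hN : 0 < N) : (ζ ^ (2 * N - 1)) ^ N = -1 := by
  rw [pow_right_comm, root_pow_eq_neg_one, Odd.neg_one_pow ⟨N - 1, by omega⟩]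

theorem phi_mk {g : ℕ} (hg : Odd g) (p : (ZMod Q)[X]) :
    phi Q N g hg (mk _ p) = aeval (ζ ^ g) p :=
  rfl

theorem phi_two_mul_sub_one_mk (hN : 0 < N) (hg : Odd (2 * N - 1)) {p : (ZMod Q)[X]}
    (hp : p.natDegree ≤ N) : phi Q N (2 * N - 1) hg (mk _ p) = -mk _ (reflect N p) := by
  let _ := invertibleOfRightInverse (ζ ^ (2 * N - 1)) ζ (root_pow_two_mul_sub_one_mul_root hN)
  have h := eval₂_reflect_mul_pow (algebraMap (ZMod Q) (Rq Q N)) (ζ ^ (2 * N - 1)) N p hp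
  rw [root_pow_two_mul_sub_one_pow hN, mul_neg_one] at h
  rw [phi_mk, aeval_def, ← h, ← aeval_eq, aeval_def]
  rfl

theorem coeffOf_add (hN : 0 < N) (a b : Rq Q N) (k : ℕ) :
    coeffOf hN (a + b) k = coeffOf hN a k + coeffOf hN b k := by
  simp only [coeffOf, map_add, coeff_add]

theorem degree_modByMonicHom_lt (hN : 0 < N) (m : Rq Q N) :
    (modByMonicHom (monicXN Q N hN) m).degree < (N : WithBot ℕ) := by
  obtain ⟨p, rfl⟩ := mk_surjective m
  exact degree_modByMonic_X_pow_add_one_lt hN p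

theorem coeffOf_eq_zero_of_le (hN : 0 < N) (m : Rq Q N) {k : ℕ} (hk : N ≤ k) :
    coeffOf hN m k = 0 :=
  coeff_eq_zero_of_degree_lt ((degree_modByMonicHom_lt hN m).trans_le (by exact_mod_cast hk))

theorem coeffOf_mk_of_natDegree_le (hN : 0 < N) {q : (ZMod Q)[X]} (hq : q.natDegree ≤ N)
    {j : ℕ} (hj : j < N) : coeffOf hN (mk _ q) j = q.coeff j - if j = 0 then q.coeff N else 0 := by
  rw [coeffOf, modByMonicHom_mk, modByMonic_X_pow_add_one_of_natDegree_le hN hq, coeff_sub,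
    coeff_C_mul, coeff_add, coeff_X_pow, if_neg hj.ne, coeff_one, zero_add, mul_ite, mul_one,
    mul_zero]

theorem coeffOf_phi_two_mul_sub_one (hN : 0 < N) (hg : Odd (2 * N - 1)) (m : Rq Q N) {j : ℕ}
    (hj : j < N) :
    coeffOf hN (phi Q N (2 * N - 1) hg m) j =
      (if j = 0 then coeffOf hN m 0 else 0) - coeffOf hN m (N - j) := by
  set p := modByMonicHom (monicXN Q N hN) m
  have hp : p.natDegree ≤ N := natDegree_le_of_degree_le (degree_modByMonicHom_lt hN m).le
  have hreflect : (-reflect N p).natDegree ≤ N := by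
    simpa [natDegree_neg, hp] using natDegree_reflect_le (N := N) (p := p)
  conv_lhs => rw [← mk_leftInverse (monicXN Q N hN) m]
  rw [phi_two_mul_sub_one_mk hN hg hp, ← map_neg, coeffOf_mk_of_natDegree_le hN hreflect hj,
    coeff_neg, coeff_neg, coeff_reflect, coeff_reflect, revAt_le hj.le, revAt_le le_rfl,
    Nat.sub_self]
  show _ = (if j = 0 then p.coeff 0 else 0) - p.coeff (N - j)
  split_ifs <;> ring

end

/-- The first folding step (`i = 0`, `g = 2N − 1`) of the ring-repacking algorithm:
`m + φ_{2N−1}(m)` has constant coefficient `2·m[0]` and `k`-th coefficient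
`m[k] − m[N−k]` for `1 ≤ k ≤ N − 1`. -/
theorem first_folding_step (k N Q : ℕ) (hN : N = 2 ^ k)
    (m : Rq Q N) :
    coeffOf (hN ▸ Nat.two_pow_pos k)
        (m + phi Q N (2 * N - 1) ⟨N - 1, by have := hN ▸ Nat.two_pow_pos k; omega⟩ m) 0 =
      2 * coeffOf (hN ▸ Nat.two_pow_pos k) m 0 ∧
    ∀ j, 1 ≤ j → j ≤ N - 1 →
      coeffOf (hN ▸ Nat.two_pow_pos k)
          (m + phi Q N (2 * N - 1) ⟨N - 1, by have := hN ▸ Nat.two_pow_pos k; omega⟩ m) j =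
        coeffOf (hN ▸ Nat.two_pow_pos k) m j - coeffOf (hN ▸ Nat.two_pow_pos k) m (N - j) := by
  have hNpos : 0 < N := hN ▸ Nat.two_pow_pos k
  -- `erw`: the oddness witness in the statement is elaborated at type `∃ k, _`, not `Odd _`.
  refine ⟨?_, fun j hj1 hjN => ?_⟩
  · erw [coeffOf_add, coeffOf_phi_two_mul_sub_one _ _ _ hNpos, if_pos rfl, Nat.sub_zero,
      coeffOf_eq_zero_of_le _ _ le_rfl, sub_zero, two_mul]
  · erw [coeffOf_add, coeffOf_phi_two_mul_sub_one _ _ _ (by omega), if_neg (by omega), zero_sub,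
      sub_eq_add_neg]
end

section
/- Let N be a power of two, Q a positive integer, R_N = (ZMod Q)[X]/(X^N + 1), and let k be a power of two dividing N. Then every element m of R_N can be written uniquely as m = Σ_{i=0}^{k−1} X^i · m_i(X^k), where each m_i is (the image under X ↦ X^k of) an element of R_{N/k} = (ZMod Q)[X]/(X^{N/k} + 1); equivalently, R_N is a free module of rank k over the subring ι(R_{N/k}), with basis 1, X, …, X^{k−1}, where ι is the embedding X ↦ X^k. -/
open Polynomial AdjoinRoot

/-!
Mapping `Y ↦ X^k` identifies `R[X]/(p(X^k))` with the tower `(R[Y]/(p))[X]/(X^k - Y)`: the two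
obvious lifts are mutually inverse. Over `R[Y]/(p)` the polynomial `X^k - Y` is monic of degree
`k`, so the tower is free with power basis `1, X, …, X^(k-1)`. This holds for every commutative
ring `R` and every polynomial `p`; for the theorem, `p = X^(N/k) + 1` and `p(X^k) = X^N + 1`.
-/

noncomputable section

namespace AdjoinRoot

variable {R : Type*} [CommRing R] {p q : R[X]} {k : ℕ}

theorem aeval_root_pow_eq_zero_of_expand_eq (hq : expand R k p = q) :
    aeval (root q ^ k) p = 0 := by
  rw [← expand_aeval, hq, aeval_eq, mk_self]

def expandHom (hq : expand R k p = q) : AdjoinRoot p →ₐ[R] AdjoinRoot q :=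
  liftAlgHom p (Algebra.ofId R _) (root q ^ k) (aeval_root_pow_eq_zero_of_expand_eq hq)

theorem expandHom_root (hq : expand R k p = q) : expandHom hq (root p) = root q ^ k :=
  liftAlgHom_root _ _ _ _

theorem expandHom_of (hq : expand R k p = q) (r : R) : expandHom hq (of p r) = of q r :=
  liftAlgHom_of _ _ _ _ r

theorem root_pow_eq_of_root (a : R) : root (X ^ k - C a) ^ k = of _ a := by
  rw [← sub_eq_zero, ← mk_X, ← mk_C, ← map_pow, ← map_sub, mk_self]

def towerEquiv (hq : expand R k p = q) : AdjoinRoot (X ^ k - C (root p)) ≃+* AdjoinRoot q :=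
  RingEquiv.ofRingHom
    (lift (expandHom hq).toRingHom (root q) (by simp [expandHom_root]))
    (lift (algebraMap R _) (root _) (by
      rw [← aeval_def, ← hq, expand_aeval, root_pow_eq_of_root, ← algebraMap_eq,
        aeval_algebraMap_apply, aeval_eq, mk_self, map_zero]))
    (by
      ext
      · simp [lift_of, expandHom_of, algebraMap_eq', algebraMap_eq]
      · simp [lift_root])
    (by
      ext
      · simp [lift_of, expandHom_of, algebraMap_eq', algebraMap_eq]
      · simp [lift_of, expandHom_root, lift_root, root_pow_eq_of_root]
      · simp [lift_root])

theorem towerEquiv_of (hq : expand R k p = q) (a : AdjoinRoot p) :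
    towerEquiv hq (of _ a) = expandHom hq a := by
  simp [towerEquiv, lift_of]

theorem towerEquiv_root (hq : expand R k p = q) : towerEquiv hq (root _) = root q := by
  simp [towerEquiv, lift_root]

theorem bijective_sum_smul_root_pow (hk : k ≠ 0) (a : R) :
    Function.Bijective fun v : Fin k → R ↦ ∑ i, v i • root (X ^ k - C a) ^ (i : ℕ) := by
  rcases subsingleton_or_nontrivial R with hR | hR
  -- over the zero ring `natDegree (X ^ k - C a) = 0`, so the power basis is not indexed by `Fin k`
  · have := Module.subsingleton R (AdjoinRoot (X ^ k - C a))
    exact ⟨fun _ _ _ ↦ Subsingleton.elim _ _, fun _ ↦ ⟨0, Subsingleton.elim _ _⟩⟩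
  let b := (powerBasis' (monic_X_pow_sub_C a hk)).basis.reindex (finCongr natDegree_X_pow_sub_C)
  have hb :
      (fun v : Fin k → R ↦ ∑ i, v i • root (X ^ k - C a) ^ (i : ℕ)) = b.equivFun.symm := by
    funext v
    simp only [b, Module.Basis.equivFun_symm_apply, Module.Basis.coe_reindex, PowerBasis.coe_basis,
      powerBasis'_gen, Function.comp_apply]
    rfl
  rw [hb]
  exact b.equivFun.symm.bijective

theorem bijective_sum_root_pow_mul_expandHom (hk : k ≠ 0) (hq : expand R k p = q) :
    Function.Bijective fun v : Fin k → AdjoinRoot p ↦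
      ∑ i : Fin k, root q ^ (i : ℕ) * expandHom hq (v i) := by
  have hfactor :
      (fun v : Fin k → AdjoinRoot p ↦ ∑ i : Fin k, root q ^ (i : ℕ) * expandHom hq (v i)) =
      towerEquiv hq ∘ fun v : Fin k → AdjoinRoot p ↦
        ∑ i : Fin k, v i • root (X ^ k - C (root p)) ^ (i : ℕ) := by
    funext v
    simp [map_sum, Algebra.smul_def, towerEquiv_of, towerEquiv_root, mul_comm]
  rw [hfactor]
  exact (towerEquiv hq).bijective.comp (bijective_sum_smul_root_pow hk (root p))

end AdjoinRoot

end

theorem unique_decomposition_over_subring_general (N k Q : ℕ)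
    (hkpow : ∃ b, k = 2 ^ b) (hdvd : k ∣ N) :
    ∃ ι : Rq Q (N / k) →+* Rq Q N,
      ι (root (X ^ (N / k) + 1 : (ZMod Q)[X])) = (root (X ^ N + 1 : (ZMod Q)[X])) ^ k ∧
      ∀ m : Rq Q N, ∃! v : Fin k → Rq Q (N / k),
        m = ∑ i : Fin k, (root (X ^ N + 1 : (ZMod Q)[X])) ^ (i : ℕ) * ι (v i) := by
  have hk : k ≠ 0 := by
    obtain ⟨b, rfl⟩ := hkpow
    positivity
  have hq : expand (ZMod Q) k (X ^ (N / k) + 1) = X ^ N + 1 := by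
    rw [map_add, map_pow, expand_X, map_one, ← pow_mul, Nat.mul_div_cancel' hdvd]
  refine ⟨(AdjoinRoot.expandHom hq).toRingHom, AdjoinRoot.expandHom_root hq, fun m ↦ ?_⟩
  obtain ⟨v, hv, hv_unique⟩ :=
    (AdjoinRoot.bijective_sum_root_pow_mul_expandHom hk hq).existsUnique m
  exact ⟨v, hv.symm, fun w hw ↦ hv_unique w hw.symm⟩

/-- For `k | N` powers of two, `R_N = (ZMod Q)[X]/(X^N+1)` is free of rank `k` over the
image of `R_{N/k}` under the embedding `ι : X ↦ X^k`, with basis `1, X, …, X^{k−1}`: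
every `m ∈ R_N` decomposes uniquely as `m = Σ_{i<k} X^i · ι(m_i)`. -/
theorem unique_decomposition_over_subring (N k Q : ℕ)
    (hNpow : ∃ a, N = 2 ^ a) (hkpow : ∃ b, k = 2 ^ b) (hdvd : k ∣ N) (hQ : 0 < Q) :
    ∃ ι : Rq Q (N / k) →+* Rq Q N,
      ι (root (X ^ (N / k) + 1 : (ZMod Q)[X])) = (root (X ^ N + 1 : (ZMod Q)[X])) ^ k ∧
      ∀ m : Rq Q N, ∃! v : Fin k → Rq Q (N / k),
        m = ∑ i : Fin k, (root (X ^ N + 1 : (ZMod Q)[X])) ^ (i : ℕ) * ι (v i) :=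
  unique_decomposition_over_subring_general N k Q hkpow hdvd
end

section
/- Let N be a power of two, Q a positive integer, and R = (ZMod Q)[X]/(X^N + 1). Given a function f : Fin N → ZMod Q, define u_f ∈ R by u_f = f(0) − Σ_{i=1}^{N−1} f(N−i)·X^i. Then for every integer k with 0 ≤ k ≤ N − 1, the constant coefficient of X^k · u_f (i.e., the degree-0 coefficient of its unique representative of degree < N) equals f(k). -/
open Polynomial AdjoinRoot

/-!
Since `X ^ N = -1`, for `0 < j < 2 * N` the constant coefficient of `X ^ j` is `-1` when `j = N`
and `0` otherwise. In `X ^ k * u_f` the term `f 0 * X ^ k` therefore contributes `f 0` exactly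
when `k = 0`, and among the terms `-f (N - i) * X ^ (k + i)` only `i = N - k` contributes,
giving `f k` when `k ≠ 0`.
-/

namespace AdjoinRoot

variable {R : Type*} [CommRing R] {g : R[X]}

theorem modByMonicHom_root_pow (hg : g.Monic) {n : ℕ} (hn : n < g.natDegree) :
    modByMonicHom hg (root g ^ n) = X ^ n := by
  nontriviality R
  rw [← mk_X, ← map_pow, modByMonicHom_mk, modByMonic_eq_self_iff hg]
  exact degree_lt_degree ((natDegree_X_pow_le n).trans_lt hn)

end AdjoinRoot

section Negacyclic

variable {Q N : ℕ} (hN : 0 < N)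

theorem coeffOf_neg (m : Rq Q N) (k : ℕ) : coeffOf hN (-m) k = -coeffOf hN m k := by
  simp only [coeffOf, map_neg, coeff_neg]

theorem coeffOf_sub (m m' : Rq Q N) (k : ℕ) :
    coeffOf hN (m - m') k = coeffOf hN m k - coeffOf hN m' k := by
  simp only [coeffOf, map_sub, coeff_sub]

theorem coeffOf_sum {ι : Type*} (s : Finset ι) (m : ι → Rq Q N) (k : ℕ) :
    coeffOf hN (∑ i ∈ s, m i) k = ∑ i ∈ s, coeffOf hN (m i) k := by
  simp only [coeffOf, map_sum, finsetSum_coeff]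

theorem coeffOf_algebraMap_mul (a : ZMod Q) (m : Rq Q N) (k : ℕ) :
    coeffOf hN (algebraMap (ZMod Q) (Rq Q N) a * m) k = a * coeffOf hN m k := by
  simp only [coeffOf, ← Algebra.smul_def, map_smul, coeff_smul, smul_eq_mul]

theorem coeffOf_root_pow_zero_of_lt {n : ℕ} (hn : n < N) :
    coeffOf hN (root (X ^ N + 1 : (ZMod Q)[X]) ^ n) 0 = if n = 0 then 1 else 0 := by
  nontriviality (ZMod Q)
  have hdeg : (X ^ N + 1 : (ZMod Q)[X]).natDegree = N := by
    simpa using natDegree_X_pow_add_C (n := N) (r := (1 : ZMod Q))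
  rw [coeffOf, modByMonicHom_root_pow _ (by rwa [hdeg]), coeff_X_pow]
  simp only [eq_comm]

theorem coeffOf_root_pow_zero {j : ℕ} (hj : j < 2 * N) :
    coeffOf hN (root (X ^ N + 1 : (ZMod Q)[X]) ^ j) 0 =
      if j = 0 then 1 else if j = N then -1 else 0 := by
  rcases lt_or_ge j N with hjN | hjN
  · rw [coeffOf_root_pow_zero_of_lt hN hjN, if_neg hjN.ne]
  · obtain ⟨n, rfl⟩ := Nat.exists_eq_add_of_le hjN
    rw [pow_add, root_pow_eq_neg_one, neg_one_mul, coeffOf_neg,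
      coeffOf_root_pow_zero_of_lt hN (by omega)]
    rw [if_neg (show N + n ≠ 0 by omega), apply_ite Neg.neg, neg_zero]
    simp only [Nat.add_eq_left]

theorem coeffOf_root_pow_add_zero {k i : ℕ} (hk : k < N) (hi : 0 < i) (hiN : i < N) :
    coeffOf hN (root (X ^ N + 1 : (ZMod Q)[X]) ^ (k + i)) 0 = if i = N - k then -1 else 0 := by
  rw [coeffOf_root_pow_zero hN (by omega), if_neg (by omega)]
  exact if_congr (by omega) rfl rfl

end Negacyclic

theorem test_vector_constant_coeff_general (c N Q : ℕ) (hN : N = 2 ^ c) [NeZero N]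
    (f : Fin N → ZMod Q) (u : Rq Q N)
    (hu : u = algebraMap (ZMod Q) (Rq Q N) (f 0) -
      ∑ i ∈ Finset.Ico 1 N,
        algebraMap (ZMod Q) (Rq Q N) (f (Fin.ofNat N (N - i : ℕ))) *
          (root (X ^ N + 1 : (ZMod Q)[X])) ^ i)
    (k : Fin N) :
    coeffOf (hN ▸ Nat.two_pow_pos c)
        ((root (X ^ N + 1 : (ZMod Q)[X])) ^ (k : ℕ) * u) 0 = f k := by
  have hk := k.isLt
  subst hu
  rw [mul_sub, Finset.mul_sum, mul_comm _ (algebraMap _ _ (f 0))]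
  simp only [mul_left_comm _ (algebraMap _ _ _), ← pow_add, coeffOf_sub, coeffOf_sum,
    coeffOf_algebraMap_mul]
  rw [coeffOf_root_pow_zero_of_lt _ hk, Finset.sum_congr rfl fun i hi => by
    rw [coeffOf_root_pow_add_zero _ hk (Finset.mem_Ico.1 hi).1 (Finset.mem_Ico.1 hi).2]]
  simp only [mul_ite, mul_neg, mul_one, mul_zero, Finset.sum_ite_eq', Finset.mem_Ico]
  rcases Nat.eq_zero_or_pos (k : ℕ) with hk0 | hk0
  · rw [if_pos hk0, if_neg (by omega), sub_zero]
    exact congrArg f (Fin.ext hk0.symm)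
  · rw [if_neg hk0.ne', if_pos (by omega), zero_sub, neg_neg, Nat.sub_sub_self hk.le,
      Fin.ofNat_val_eq_self]

/-- Correctness of the large-domain private function evaluation: encoding the input
`k` in the exponent as `X^k` and multiplying by the test vector
`u_f = f(0) − Σ_{i=1}^{N−1} f(N−i)·X^i` puts `f(k)` in the constant coefficient. -/
theorem test_vector_constant_coeff (c N Q : ℕ) (hN : N = 2 ^ c) (hQ : 0 < Q) [NeZero N]
    (f : Fin N → ZMod Q) (u : Rq Q N)
    (hu : u = algebraMap (ZMod Q) (Rq Q N) (f 0) -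
      ∑ i ∈ Finset.Ico 1 N,
        algebraMap (ZMod Q) (Rq Q N) (f (Fin.ofNat N (N - i : ℕ))) *
          (root (X ^ N + 1 : (ZMod Q)[X])) ^ i)
    (k : Fin N) :
    coeffOf (hN ▸ Nat.two_pow_pos c)
        ((root (X ^ N + 1 : (ZMod Q)[X])) ^ (k : ℕ) * u) 0 = f k :=
  test_vector_constant_coeff_general c N Q hN f u hu k
end

section
/- Let N be a power of two and let a < b be real numbers. Let f : ℝ → ℝ and define u_f ∈ ℝ[X]/(X^N + 1) by u_f = f(a) − Σ_{i=1}^{N−1} f(a + ((N−i)/N)·(b−a))·X^i. Then for every integer k with 0 ≤ k ≤ N − 1, the constant coefficient of X^k · u_f equals f(a + (k/N)·(b−a)). -/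
/-!
Because `X ^ N = -1`, multiplication by `X ^ k` rotates the coefficients of the reduced
representative negacyclically: the constant coefficient of `X ^ k * m` is `m₀` for `k = 0` and
`-m_{N-k}` for `0 < k < N`. The coefficients of `u_f` are `f a` at degree `0` and
`-f (a + ((N - i)/N)(b - a))` at degree `i ≥ 1`, so taking `i = N - k` gives the claim.
-/

open Polynomial AdjoinRoot

noncomputable section

/-- The real negacyclic ring `ℝ[X]/(X^N + 1)`. -/
abbrev Rr (N : ℕ) := AdjoinRoot (X ^ N + 1 : ℝ[X])

lemma monicXNR (N : ℕ) (hN : 0 < N) : (X ^ N + 1 : ℝ[X]).Monic :=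
  Polynomial.monic_X_pow_add (lt_of_le_of_lt Polynomial.degree_one_le (by exact_mod_cast hN))

/-- The `k`-th coefficient of the unique degree `< N` representative of `m`. -/
def coeffOfR {N : ℕ} (hN : 0 < N) (m : Rr N) (k : ℕ) : ℝ :=
  ((AdjoinRoot.modByMonicHom (monicXNR N hN)) m).coeff k

lemma AdjoinRoot.root_X_pow_add_one_pow_self {R : Type*} [CommRing R] (N : ℕ) :
    root (X ^ N + 1 : R[X]) ^ N = -1 := by
  rw [eq_neg_iff_add_eq_zero, ← mk_X, ← map_pow, ← map_one (mk _), ← map_add, mk_self]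

section

variable {N : ℕ} (hN : 0 < N)

lemma coeffOfR_sub (m m' : Rr N) (i : ℕ) :
    coeffOfR hN (m - m') i = coeffOfR hN m i - coeffOfR hN m' i := by
  simp only [coeffOfR, map_sub, coeff_sub]

lemma coeffOfR_smul (r : ℝ) (m : Rr N) (i : ℕ) :
    coeffOfR hN (r • m) i = r * coeffOfR hN m i := by
  simp only [coeffOfR, map_smul, coeff_smul, smul_eq_mul]

lemma coeffOfR_sum {ι : Type*} (s : Finset ι) (m : ι → Rr N) (i : ℕ) :
    coeffOfR hN (∑ j ∈ s, m j) i = ∑ j ∈ s, coeffOfR hN (m j) i := by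
  simp only [coeffOfR, map_sum, finsetSum_coeff]

lemma sum_coeffOfR_smul_root_pow (m : Rr N) :
    ∑ i ∈ Finset.range N, coeffOfR hN m i • root (X ^ N + 1 : ℝ[X]) ^ i = m := by
  have hdeg : (modByMonicHom (monicXNR N hN) m).natDegree < N := by
    obtain ⟨p, rfl⟩ := mk_surjective m
    have hne : (X ^ N + 1 : ℝ[X]) ≠ 1 := by simp
    have hdegN : (X ^ N + 1 : ℝ[X]).natDegree = N := by rw [← C_1, natDegree_X_pow_add_C]
    simpa only [modByMonicHom_mk, hdegN] using natDegree_modByMonic_lt p (monicXNR N hN) hne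
  have h := aeval_eq_sum_range' hdeg (root (X ^ N + 1 : ℝ[X]))
  rw [aeval_eq, mk_leftInverse (monicXNR N hN) m] at h
  exact h.symm

lemma coeffOfR_root_pow {j : ℕ} (hj : j < N) (i : ℕ) :
    coeffOfR hN (root (X ^ N + 1 : ℝ[X]) ^ j) i = if i = j then 1 else 0 := by
  have hlt : ((X : ℝ[X]) ^ j).degree < (X ^ N + 1 : ℝ[X]).degree := by
    rw [degree_X_pow, ← C_1, degree_X_pow_add_C hN]
    exact_mod_cast hj
  rw [coeffOfR, ← mk_X, ← map_pow, modByMonicHom_mk,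
    (modByMonic_eq_self_iff (monicXNR N hN)).2 hlt, coeff_X_pow]

lemma coeffOfR_root_pow_zero {j : ℕ} (hj : j < 2 * N) :
    coeffOfR hN (root (X ^ N + 1 : ℝ[X]) ^ j) 0 =
      if j = 0 then 1 else if j = N then -1 else 0 := by
  rcases lt_or_ge j N with hjN | hjN
  · simp [coeffOfR_root_pow hN hjN, eq_comm, hjN.ne']
  · obtain ⟨l, rfl⟩ := Nat.exists_eq_add_of_le hjN
    rw [pow_add, root_X_pow_add_one_pow_self, neg_one_mul, ← neg_one_smul ℝ, coeffOfR_smul,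
      coeffOfR_root_pow hN (by omega)]
    simp [hN.ne', eq_comm]

lemma coeffOfR_root_pow_mul_zero {k : ℕ} (hk : k < N) (m : Rr N) :
    coeffOfR hN (root (X ^ N + 1 : ℝ[X]) ^ k * m) 0 =
      if k = 0 then coeffOfR hN m 0 else -coeffOfR hN m (N - k) := by
  conv_lhs => rw [← sum_coeffOfR_smul_root_pow hN m]
  simp only [Finset.mul_sum, mul_smul_comm, ← pow_add, coeffOfR_sum, coeffOfR_smul]
  rw [Finset.sum_congr rfl fun i hi => by
    rw [coeffOfR_root_pow_zero hN (by rw [Finset.mem_range] at hi; omega)]]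
  rcases eq_or_ne k 0 with rfl | hk0
  · rw [Finset.sum_eq_single_of_mem 0 (Finset.mem_range.2 hk)]
    · simp
    · intro i hi hi0
      simp [hi0, (Finset.mem_range.1 hi).ne]
  · have hiff : ∀ i, k + i = N ↔ N - k = i := fun i => by omega
    simp [hk0, hiff, hN.ne']

lemma coeffOfR_algebraMap_sub_sum {j : ℕ} (hj : j < N) (c₀ : ℝ) (c : ℕ → ℝ) :
    coeffOfR hN (algebraMap ℝ (Rr N) c₀ -
        ∑ i ∈ Finset.Ico 1 N, algebraMap ℝ (Rr N) (c i) * root (X ^ N + 1 : ℝ[X]) ^ i) j =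
      if j = 0 then c₀ else -c j := by
  rw [Algebra.algebraMap_eq_smul_one, ← pow_zero (root _)]
  simp only [← Algebra.smul_def, coeffOfR_sub, coeffOfR_sum, coeffOfR_smul,
    coeffOfR_root_pow hN hN]
  rw [Finset.sum_congr rfl fun i hi => by rw [coeffOfR_root_pow hN (Finset.mem_Ico.1 hi).2]]
  rcases eq_or_ne j 0 with rfl | hj0
  · simp
  · simp [hj0, Nat.one_le_iff_ne_zero.2 hj0, hj]

end

theorem real_test_vector_constant_coeff_general (c N : ℕ) (hN : N = 2 ^ c) (a b : ℝ)
    (f : ℝ → ℝ) (u : Rr N)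
    (hu : u = algebraMap ℝ (Rr N) (f a) -
      ∑ i ∈ Finset.Ico 1 N,
        algebraMap ℝ (Rr N) (f (a + (((N - i : ℕ) : ℝ) / (N : ℝ)) * (b - a))) *
          (root (X ^ N + 1 : ℝ[X])) ^ i)
    (k : ℕ) (hk : k ≤ N - 1) :
    coeffOfR (hN ▸ Nat.two_pow_pos c) ((root (X ^ N + 1 : ℝ[X])) ^ k * u) 0 =
      f (a + ((k : ℝ) / (N : ℝ)) * (b - a)) := by
  have hN0 : 0 < N := hN ▸ Nat.two_pow_pos c
  rw [coeffOfR_root_pow_mul_zero _ (by omega), hu]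
  rcases eq_or_ne k 0 with rfl | hk0
  · rw [if_pos rfl, coeffOfR_algebraMap_sub_sum _ hN0, if_pos rfl, Nat.cast_zero, zero_div,
      zero_mul, add_zero]
  · rw [if_neg hk0, coeffOfR_algebraMap_sub_sum _ (by omega), if_neg (by omega), neg_neg,
      Nat.sub_sub_self (by omega)]

/-- Correctness of the test-vector encoding of a real scoring function `f : [a,b) → ℝ`
with discretization factor `1/N`: multiplying `u_f` by `X^k` puts
`f(a + (k/N)(b−a)) = f(g⁻¹(k/N))` in the constant coefficient. -/
theorem real_test_vector_constant_coeff (c N : ℕ) (hN : N = 2 ^ c) (a b : ℝ) (hab : a < b)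
    (f : ℝ → ℝ) (u : Rr N)
    (hu : u = algebraMap ℝ (Rr N) (f a) -
      ∑ i ∈ Finset.Ico 1 N,
        algebraMap ℝ (Rr N) (f (a + (((N - i : ℕ) : ℝ) / (N : ℝ)) * (b - a))) *
          (root (X ^ N + 1 : ℝ[X])) ^ i)
    (k : ℕ) (hk : k ≤ N - 1) :
    coeffOfR (hN ▸ Nat.two_pow_pos c) ((root (X ^ N + 1 : ℝ[X])) ^ k * u) 0 =
      f (a + ((k : ℝ) / (N : ℝ)) * (b - a)) :=
  real_test_vector_constant_coeff_general c N hN a b f u hu k hk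

end
end
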